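/- Let p_n, q_n be the continuants of the continued fraction with a₀ = 0, a_n = U^{-1}T (n odd), a_n = -T (n even ≥ 2), and let F(X) = (X² - U)/(2X - T). Then for all n ≥ 0, F(p_{2^n - 1}/q_{2^n - 1}) = p_{2^{n+1} - 1}/q_{2^{n+1} - 1} holds in Q(T,U); that is, applying Newton's iterator to the (2^n - 1)-th convergent yields the (2^{n+1} - 1)-th convergent. -/

import Mathlib

noncomputable section
namespace Paper
open MvPolynomial Finset

abbrev K : Type := FractionRing (MvPolynomial (Fin 2) ℚ)

def T : K := algebraMap (MvPolynomial (Fin 2) ℚ) K (X 0)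
def U : K := algebraMap (MvPolynomial (Fin 2) ℚ) K (X 1)

/-- The Newton iterator of `f = X² - T·X + U`. -/
def F (x : K) : K := (x ^ 2 - U) / (2 * x - T)

/-- `h 0 = T`, `h (n+1) = h n ² - 2 U^(2^n)`. -/
def h : ℕ → K
  | 0 => T
  | n + 1 => h n ^ 2 - 2 * U ^ 2 ^ n

/-- Partial denominators: `a 0 = 0`, `a n = U⁻¹T` for odd `n`, `a n = -T` for even `n ≥ 2`. -/
def a (n : ℕ) : K := if n = 0 then 0 else if Odd n then U⁻¹ * T else -T

/-- Partial denominators: `b n = T` for even `n`, `b n = -U⁻¹T` for odd `n`. -/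
def b (n : ℕ) : K := if Odd n then -(U⁻¹ * T) else T

/-- Continuant numerators, shifted by 2: `P k = p_{k-2}`, so `P 0 = p_{-2} = 0`,
`P 1 = p_{-1} = 1`, `P (n+2) = p_n = a n • p_{n-1} + p_{n-2}`. -/
def P : ℕ → K
  | 0 => 0
  | 1 => 1
  | n + 2 => a n * P (n + 1) + P n

/-- Continuant denominators, shifted by 2: `Q k = q_{k-2}`. -/
def Q : ℕ → K
  | 0 => 1
  | 1 => 0
  | n + 2 => a n * Q (n + 1) + Q n

/-- Continuant numerators for the `b`-continued fraction, shifted by 2: `R k = r_{k-2}`. -/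
def R : ℕ → K
  | 0 => 0
  | 1 => 1
  | n + 2 => b n * R (n + 1) + R n

/-- Continuant denominators for the `b`-continued fraction, shifted by 2: `Sd k = s_{k-2}`. -/
def Sd : ℕ → K
  | 0 => 1
  | 1 => 0
  | n + 2 => b n * Sd (n + 1) + Sd n


/-! ### Auxiliary material for the proof -/

/-- The Lucas sequence `s₀ = 0, s₁ = 1, s_{k+2} = T s_{k+1} - U s_k` at the polynomial level. -/
def sp : ℕ → MvPolynomial (Fin 2) ℚ
  | 0 => 0
  | 1 => 1
  | k + 2 => X 0 * sp (k + 1) - X 1 * sp k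

/-- The Lucas sequence in `K`. -/
def s (k : ℕ) : K := algebraMap (MvPolynomial (Fin 2) ℚ) K (sp k)

lemma s_zero : s 0 = 0 := by simp [s, sp]
lemma s_one : s 1 = 1 := by simp [s, sp]
lemma s_rec (k : ℕ) : s (k + 2) = T * s (k + 1) - U * s k := by
  simp [s, sp, T, U, map_sub, map_mul]

lemma inj : Function.Injective (algebraMap (MvPolynomial (Fin 2) ℚ) K) :=
  IsFractionRing.injective _ _

lemma hU : U ≠ 0 := by
  rw [U]
  exact (map_ne_zero_iff _ inj).mpr (X_ne_zero _)

/-- Evaluation point `(T,U) = (3,2)`. -/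
def v : Fin 2 → ℚ := ![3, 2]

lemma ev_sp (k : ℕ) : eval v (sp k) = 2 ^ k - 1 ∧ eval v (sp (k + 1)) = 2 ^ (k + 1) - 1 := by
  induction k with
  | zero => constructor <;> norm_num [sp, v]
  | succ k ih =>
    obtain ⟨h1, h2⟩ := ih
    refine ⟨h2, ?_⟩
    have : eval v (sp (k + 2)) = 3 * eval v (sp (k + 1)) - 2 * eval v (sp k) := by
      simp [sp, v]
    rw [this, h1, h2]; ring

lemma sp_ne (k : ℕ) (hk : k ≠ 0) : sp k ≠ 0 := by
  intro h0
  have h := (ev_sp k).1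
  rw [h0] at h
  simp at h
  have h2 : (2:ℚ) ^ 1 ≤ 2 ^ k := by
    apply pow_le_pow_right₀ (by norm_num)
    omega
  norm_num at h2
  linarith [h.symm]

lemma s_ne (k : ℕ) (hk : k ≠ 0) : s k ≠ 0 := by
  rw [s]
  exact (map_ne_zero_iff _ inj).mpr (sp_ne k hk)

lemma d_ne (m : ℕ) : 2 * U * s m - T * s (m + 1) ≠ 0 := by
  have key : (2 * X 1 * sp m - X 0 * sp (m + 1) : MvPolynomial (Fin 2) ℚ) ≠ 0 := by
    intro h0
    have h := congrArg (eval v) h0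
    have e1 := (ev_sp m).1
    have e2 := (ev_sp m).2
    simp only [map_sub, map_mul, map_ofNat, map_zero, eval_X] at h
    have hx0 : v 0 = 3 := rfl
    have hx1 : v 1 = 2 := rfl
    rw [hx0, hx1, e1, e2, pow_succ] at h
    have hp : (0:ℚ) < 2 ^ m := by positivity
    linarith
  have heq : 2 * U * s m - T * s (m + 1)
      = algebraMap (MvPolynomial (Fin 2) ℚ) K (2 * X 1 * sp m - X 0 * sp (m + 1)) := by
    simp [s, T, U, map_sub, map_mul, map_ofNat]
  rw [heq]
  exact (map_ne_zero_iff _ inj).mpr key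

/-- Addition formula for the Lucas sequence. -/
lemma s_add : ∀ k j : ℕ, s (j + k + 1) = s (j + 1) * s (k + 1) - U * s j * s k := by
  intro k
  induction k with
  | zero => intro j; simp [s_one, s_zero]
  | succ k ih =>
    intro j
    have h1 := ih (j + 1)
    have hidx : j + (k + 1) + 1 = (j + 1) + k + 1 := by omega
    rw [hidx, h1, s_rec j, s_rec k]
    ring

lemma s_doub_odd (m : ℕ) : s (2 * m + 1) = s (m + 1) ^ 2 - U * s m ^ 2 := by
  have := s_add m m
  rw [show 2 * m + 1 = m + m + 1 by omega, this]; ring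

lemma s_doub_even (m : ℕ) : s (2 * m + 2) = s (m + 1) * (T * s (m + 1) - 2 * U * s m) := by
  have h := s_add (m + 1) m
  rw [show 2 * m + 2 = m + (m + 1) + 1 by omega, h, s_rec m]
  ring

lemma P_rec (n : ℕ) : P (n + 2) = a n * P (n + 1) + P n := rfl
lemma Q_rec (n : ℕ) : Q (n + 2) = a n * Q (n + 1) + Q n := rfl

lemma a_odd (j : ℕ) : a (2 * j + 1) = U⁻¹ * T := by
  unfold a
  rw [if_neg (by omega), if_pos (Nat.odd_iff.mpr (by omega))]

lemma a_even (j : ℕ) : a (2 * j + 2) = -T := by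
  unfold a
  rw [if_neg (by omega), if_neg (by rw [Nat.odd_iff]; omega)]

/-- Closed forms for the continuants in terms of the Lucas sequence. -/
lemma PQ_closed (j : ℕ) :
    P (2 * j + 2) = (-1) ^ j * U * s (2 * j) * (U⁻¹) ^ j ∧
    P (2 * j + 3) = (-1) ^ j * s (2 * j + 1) * (U⁻¹) ^ j ∧
    Q (2 * j + 2) = (-1) ^ j * s (2 * j + 1) * (U⁻¹) ^ j ∧
    Q (2 * j + 3) = (-1) ^ j * s (2 * j + 2) * (U⁻¹) ^ (j + 1) := by
  induction j with
  | zero =>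
    refine ⟨?_, ?_, ?_, ?_⟩
    · show a 0 * P 1 + P 0 = _
      simp [a, P, s_zero]
    · show a 1 * P 2 + P 1 = _
      have := a_odd 0
      norm_num at this ⊢
      rw [this]
      show U⁻¹ * T * (a 0 * P 1 + P 0) + P 1 = s 1
      simp [a, P, s_one]
    · show a 0 * Q 1 + Q 0 = _
      simp [a, Q, s_one]
    · show a 1 * Q 2 + Q 1 = _
      have h1 := a_odd 0
      norm_num at h1 ⊢
      rw [h1]
      show U⁻¹ * T * (a 0 * Q 1 + Q 0) + Q 1 = s 2 * U⁻¹
      have h2 : s 2 = T := by rw [show (2:ℕ) = 0 + 2 from rfl, s_rec, s_one, s_zero]; ring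
      simp [a, Q, h2]
      ring
  | succ j ih =>
    obtain ⟨hp2, hp3, hq2, hq3⟩ := ih
    have hs2 : s (2 * j + 2) = T * s (2 * j + 1) - U * s (2 * j) := s_rec (2 * j)
    have hs3 : s (2 * j + 3) = T * s (2 * j + 2) - U * s (2 * j + 1) := s_rec (2 * j + 1)
    have hs4 : s (2 * j + 4) = T * s (2 * j + 3) - U * s (2 * j + 2) := s_rec (2 * j + 2)
    have hp4 : P (2 * j + 4) = (-1) ^ (j + 1) * s (2 * j + 2) * (U⁻¹) ^ j := by
      rw [show 2 * j + 4 = (2 * j + 2) + 2 by omega, P_rec, a_even,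
        show 2 * j + 2 + 1 = 2 * j + 3 by omega, hp3, hp2, hs2]
      ring
    have hq4 : Q (2 * j + 4) = (-1) ^ (j + 1) * s (2 * j + 3) * (U⁻¹) ^ (j + 1) := by
      rw [show 2 * j + 4 = (2 * j + 2) + 2 by omega, Q_rec, a_even,
        show 2 * j + 2 + 1 = 2 * j + 3 by omega, hq3, hq2, hs3]
      field_simp [hU]
      linear_combination (-(U⁻¹ ^ j * s (2 * j + 1) * (-1) ^ j)) * (mul_inv_cancel₀ hU)
    refine ⟨?_, ?_, ?_, ?_⟩
    · rw [show 2 * (j + 1) + 2 = 2 * j + 4 by omega, hp4,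
        show 2 * (j + 1) = 2 * j + 2 by omega]
      field_simp [hU]
      linear_combination (-(s (2 * j + 2) * U⁻¹ ^ j)) * (mul_inv_cancel₀ hU)
    · rw [show 2 * (j + 1) + 3 = (2 * j + 3) + 2 by omega, P_rec,
        show 2 * j + 3 = 2 * (j + 1) + 1 by omega, a_odd,
        show 2 * (j + 1) + 1 + 1 = 2 * j + 4 by omega, hp4,
        show 2 * (j + 1) + 1 = 2 * j + 3 by omega, hp3, hs3]
      field_simp [hU]
      linear_combination (U⁻¹ ^ j * T * s (2 * j + 2) * (-1) ^ j - U * U⁻¹ ^ j * s (2 * j + 1) * (-1) ^ j) * (mul_inv_cancel₀ hU)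
    · rw [show 2 * (j + 1) + 2 = 2 * j + 4 by omega, hq4,
        show 2 * (j + 1) + 1 = 2 * j + 3 by omega]
    · rw [show 2 * (j + 1) + 3 = (2 * j + 3) + 2 by omega, Q_rec,
        show 2 * j + 3 = 2 * (j + 1) + 1 by omega, a_odd,
        show 2 * (j + 1) + 1 + 1 = 2 * j + 4 by omega, hq4,
        show 2 * (j + 1) + 1 = 2 * j + 3 by omega, hq3, hs4]
      field_simp [hU]
      linear_combination (U⁻¹ * U⁻¹ ^ j * T * s (2 * j + 3) * (-1) ^ j - U * U⁻¹ * U⁻¹ ^ j * s (2 * j + 2) * (-1) ^ j) * (mul_inv_cancel₀ hU)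

lemma Q_ne (m : ℕ) : Q (m + 2) ≠ 0 := by
  have hUi : (U⁻¹ : K) ≠ 0 := inv_ne_zero hU
  rcases Nat.even_or_odd m with ⟨j, hj⟩ | ⟨j, hj⟩
  · rw [show m + 2 = 2 * j + 2 by omega, (PQ_closed j).2.2.1]
    exact mul_ne_zero (mul_ne_zero (pow_ne_zero _ (by norm_num)) (s_ne _ (by omega)))
      (pow_ne_zero _ hUi)
  · rw [show m + 2 = 2 * j + 3 by omega, (PQ_closed j).2.2.2]
    exact mul_ne_zero (mul_ne_zero (pow_ne_zero _ (by norm_num)) (s_ne _ (by omega)))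
      (pow_ne_zero _ hUi)

/-- The convergents in terms of the Lucas sequence. -/
lemma ratio (m : ℕ) : P (m + 2) / Q (m + 2) = U * s m / s (m + 1) := by
  rw [div_eq_div_iff (Q_ne m) (s_ne (m + 1) (by omega))]
  rcases Nat.even_or_odd m with ⟨j, hj⟩ | ⟨j, hj⟩
  · rw [show m + 2 = 2 * j + 2 by omega, show m + 1 = 2 * j + 1 by omega,
      show m = 2 * j by omega, (PQ_closed j).1, (PQ_closed j).2.2.1]
    ring
  · rw [show m + 2 = 2 * j + 3 by omega, show m + 1 = 2 * j + 2 by omega,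
      show m = 2 * j + 1 by omega, (PQ_closed j).2.1, (PQ_closed j).2.2.2]
    field_simp [hU]
    linear_combination (-(s (2 * j + 1) * s (2 * j + 2) * U⁻¹ ^ j)) * (mul_inv_cancel₀ hU)

lemma newton_step (m : ℕ) :
    F (U * s m / s (m + 1)) = U * s (2 * m + 1) / s (2 * m + 2) := by
  have h1 : s (m + 1) ≠ 0 := s_ne _ (by omega)
  have h2 : s (2 * m + 2) ≠ 0 := s_ne _ (by omega)
  have hd : 2 * U * s m - T * s (m + 1) ≠ 0 := d_ne m
  have hden : 2 * (U * s m / s (m + 1)) - T ≠ 0 := by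
    have : 2 * (U * s m / s (m + 1)) - T = (2 * U * s m - T * s (m + 1)) / s (m + 1) := by
      field_simp
    rw [this]
    exact div_ne_zero hd h1
  rw [F, div_eq_div_iff hden h2, s_doub_odd, s_doub_even]
  field_simp
  ring

/-- Newton's iterator maps the `(2^n - 1)`-th convergent to the `(2^(n+1) - 1)`-th
convergent: `F(p_{2^n-1}/q_{2^n-1}) = p_{2^(n+1)-1}/q_{2^(n+1)-1}`, stated with the
index shift `P k = p_{k-2}`, `Q k = q_{k-2}`. -/
theorem stmt_10 (n : ℕ) :
    F (P (2 ^ n + 1) / Q (2 ^ n + 1)) = P (2 ^ (n + 1) + 1) / Q (2 ^ (n + 1) + 1) := by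
  have h1 : (1:ℕ) ≤ 2 ^ n := Nat.one_le_two_pow
  obtain ⟨m, hm⟩ : ∃ m, 2 ^ n = m + 1 := ⟨2 ^ n - 1, by omega⟩
  have e1 : 2 ^ n + 1 = m + 2 := by omega
  have e2 : 2 ^ (n + 1) + 1 = (2 * m + 1) + 2 := by rw [pow_succ]; omega
  rw [e1, e2, ratio, ratio, show m + 1 = 2 ^ n by omega,
    show 2 * m + 1 + 1 = 2 * m + 2 by omega]
  rw [show (2:ℕ) ^ n = m + 1 from hm, newton_step]

end Paper
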